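/- Let φ^o_t(Q) solve ∂_t P = A_t P + P A_t' − P S_t P with P_0 = Q positive definite. Then φ^o_t(Q) = E_t(A)(Q^{-1} + Ō_t)^{-1} E_t(A)', where Ō_t = ∫_0^t E_s(A)' S_s E_s(A) ds; moreover if Ō_t is invertible then φ^o_t(Q) ≤ O_t^{-1} with O_t = (E_t(A)')^{-1} Ō_t E_t(A)^{-1} the observability Gramian. -/

import Mathlib

/-!
Put `N_u = Q⁻¹ + Ō_u`, so that `N' = Eᵀ S E`. With `(N⁻¹)' = -N⁻¹ N' N⁻¹` one checks that
`E N⁻¹ Eᵀ` solves the Riccati equation with initial value `Q`; `N_u` stays invertible for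
`u ≥ 0` because `Ō_u ≥ 0`. The difference of two Riccati solutions solves a linear equation
`D' = B D + D C`, so Grönwall's inequality forces `φ^o = E N⁻¹ Eᵀ`. For the bound,
`O_t⁻¹ = E Ō_t⁻¹ Eᵀ`, and inversion is antitone on positive definite matrices, applied to
`Ō_t ≤ Q⁻¹ + Ō_t`.
-/

open Matrix Set Topology

attribute [local instance] Matrix.normedAddCommGroup Matrix.normedSpace

namespace Matrix

variable {𝕜 : Type*} [NontriviallyNormedField 𝕜] {l m n : Type*} [Fintype l] [Fintype m]
  [Fintype n]

theorem norm_mul_le_card_mul (M : Matrix l m 𝕜) (N : Matrix m n 𝕜) :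
    ‖M * N‖ ≤ Fintype.card m * ‖M‖ * ‖N‖ := by
  refine (norm_le_iff (by positivity)).mpr fun i j => ?_
  calc ‖(M * N) i j‖ ≤ ∑ k, ‖M i k * N k j‖ := norm_sum_le _ _
    _ ≤ ∑ _k : m, ‖M‖ * ‖N‖ := Finset.sum_le_sum fun k _ => by
        rw [norm_mul]
        exact mul_le_mul (norm_entry_le_entrywise_sup_norm M)
          (norm_entry_le_entrywise_sup_norm N) (norm_nonneg _) (norm_nonneg _)
    _ = Fintype.card m * ‖M‖ * ‖N‖ := by simp [mul_assoc]

end Matrix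

section MatrixCalculus

variable {𝕜 : Type*} [NontriviallyNormedField 𝕜] {l m n : Type*} {t : 𝕜}

theorem hasDerivAt_matrix_iff [Fintype n] {M : 𝕜 → Matrix m n 𝕜} {M' : Matrix m n 𝕜} :
    HasDerivAt M M' t ↔ ∀ i j, HasDerivAt (fun s => M s i j) (M' i j) t :=
  hasDerivAt_pi.trans (forall_congr' fun _ => hasDerivAt_pi)

theorem HasDerivAt.matrix_mul [Fintype m] [Fintype n] {M : 𝕜 → Matrix l m 𝕜}
    {N : 𝕜 → Matrix m n 𝕜} {M' : Matrix l m 𝕜} {N' : Matrix m n 𝕜} (hM : HasDerivAt M M' t)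
    (hN : HasDerivAt N N' t) :
    HasDerivAt (fun s => M s * N s) (M' * N t + M t * N') t := by
  rw [hasDerivAt_matrix_iff] at hM hN ⊢
  intro i j
  simp only [mul_apply, Matrix.add_apply, ← Finset.sum_add_distrib]
  exact HasDerivAt.fun_sum fun k _ => (hM i k).mul (hN k j)

theorem HasDerivAt.matrix_transpose [Fintype m] [Fintype n] {M : 𝕜 → Matrix m n 𝕜}
    {M' : Matrix m n 𝕜} (hM : HasDerivAt M M' t) : HasDerivAt (fun s => (M s)ᵀ) M'ᵀ t :=
  hasDerivAt_matrix_iff.mpr fun i j => hasDerivAt_matrix_iff.mp hM j i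

theorem HasDerivAt.matrix_inv [Fintype n] [DecidableEq n] {M : 𝕜 → Matrix n n 𝕜}
    {M' : Matrix n n 𝕜} (hM : HasDerivAt M M' t) (hMt : IsUnit (M t)) :
    HasDerivAt (fun s => (M s)⁻¹) (-((M t)⁻¹ * M' * (M t)⁻¹)) t := by
  have hdet : (M t).det ≠ 0 := ((isUnit_iff_isUnit_det _).mp hMt).ne_zero
  have hcont : ContinuousAt (fun s => (M s)⁻¹) t :=
    (continuousAt_matrix_inv _ (by rw [Ring.inverse_eq_inv']; exact continuousAt_inv₀ hdet)).comp
      hM.continuousAt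
  have hunit : ∀ᶠ s in 𝓝[≠] t, IsUnit (M s).det :=
    nhdsWithin_le_nhds <| ((continuous_id.matrix_det.continuousAt.comp
      hM.continuousAt).eventually_ne hdet).mono fun s hs => isUnit_iff_ne_zero.mpr hs
  refine hasDerivAt_iff_tendsto_slope.mpr ?_
  replace hM := hasDerivAt_iff_tendsto_slope.mp hM
  -- `(M s)⁻¹ - (M t)⁻¹ = -(M s)⁻¹ (M s - M t) (M t)⁻¹`
  refine ((((hcont.tendsto.mono_left nhdsWithin_le_nhds).mul hM).mul_const (M t)⁻¹).neg).congr' ?_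
  filter_upwards [hunit] with s hs
  rw [slope_def_module, slope_def_module, Matrix.mul_smul, Matrix.smul_mul, ← smul_neg]
  congr 1
  rw [Matrix.mul_sub, Matrix.sub_mul, nonsing_inv_mul _ hs, Matrix.mul_assoc (M s)⁻¹,
    mul_nonsing_inv _ ((isUnit_iff_isUnit_det _).mp hMt), Matrix.one_mul, Matrix.mul_one, neg_sub]

end MatrixCalculus

section LinearMatrixODE

variable {m p : Type*} [Fintype m] [Fintype p] {a b : ℝ}

theorem eqOn_zero_of_hasDerivAt_mul_add_mul {B : ℝ → Matrix m m ℝ} {C : ℝ → Matrix p p ℝ}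
    {D : ℝ → Matrix m p ℝ} (hB : ContinuousOn B (Icc a b)) (hC : ContinuousOn C (Icc a b))
    (hD : ∀ u ∈ Icc a b, HasDerivAt D (B u * D u + D u * C u) u) (ha : D a = 0) :
    EqOn D 0 (Icc a b) := by
  obtain ⟨KB, hKB⟩ := isCompact_Icc.exists_bound_of_continuousOn hB
  obtain ⟨KC, hKC⟩ := isCompact_Icc.exists_bound_of_continuousOn hC
  refine eq_zero_of_abs_deriv_le_mul_abs_self_of_eq_zero_right
    (K := Fintype.card m * KB + Fintype.card p * KC)
    (fun u hu => (hD u hu).continuousAt.continuousWithinAt)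
    (fun u hu => (hD u (Ico_subset_Icc_self hu)).hasDerivWithinAt) ha fun u hu => ?_
  have hu := Ico_subset_Icc_self hu
  calc ‖B u * D u + D u * C u‖ ≤ ‖B u * D u‖ + ‖D u * C u‖ := norm_add_le _ _
    _ ≤ Fintype.card m * ‖B u‖ * ‖D u‖ + Fintype.card p * ‖D u‖ * ‖C u‖ :=
      add_le_add (norm_mul_le_card_mul _ _) (norm_mul_le_card_mul _ _)
    _ ≤ Fintype.card m * KB * ‖D u‖ + Fintype.card p * ‖D u‖ * KC := by
      gcongr
      exacts [hKB u hu, hKC u hu]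
    _ = (Fintype.card m * KB + Fintype.card p * KC) * ‖D u‖ := by ring

theorem isUnit_of_hasDerivAt_mul_self [DecidableEq m] {A E : ℝ → Matrix m m ℝ}
    (hA : Continuous A) (hE0 : E 0 = 1) (hE : ∀ t, HasDerivAt E (A t * E t) t) {t : ℝ}
    (ht : 0 ≤ t) : IsUnit (E t) := by
  refine mulVec_injective_iff_isUnit.mp <| (injective_iff_map_eq_zero' (E t).mulVecLin).mpr
    fun v => ⟨fun hv => ?_, fun hv => by simp [hv]⟩
  set X := replicateCol Unit v
  -- `s ↦ E (t - s) X` solves a backward linear equation and vanishes at `s = 0`.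
  have hback : ∀ s ∈ Icc 0 t, HasDerivAt (fun s => E (t - s) * X)
      (-A (t - s) * (E (t - s) * X) + E (t - s) * X * (0 : Matrix Unit Unit ℝ)) s := by
    intro s _
    refine (((hE (t - s)).scomp s ((hasDerivAt_id s).const_sub t)).matrix_mul
      (hasDerivAt_const s X)).congr_deriv ?_
    simp [Matrix.mul_assoc]
  have hX : E (t - 0) * X = 0 := by
    rw [sub_zero, ← replicateCol_mulVec]
    simpa using congrArg (replicateCol Unit) hv
  have h := eqOn_zero_of_hasDerivAt_mul_add_mul
    (hA.comp (continuous_const.sub continuous_id)).neg.continuousOn continuousOn_const hback hX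
  have hX0 : X = 0 := by simpa [hE0] using h ⟨ht, le_rfl⟩
  ext i
  simpa [X] using congrFun (congrFun hX0 i) ()

end LinearMatrixODE

namespace Matrix

variable {n : Type*} [Fintype n]

open scoped ComplexOrder in
theorem PosDef.posSemidef_inv_sub_inv {𝕜 : Type*} [RCLike 𝕜] [DecidableEq n]
    {P R : Matrix n n 𝕜} (hP : P.PosDef) (hR : R.PosDef) (hPR : (R - P).PosSemidef) :
    (P⁻¹ - R⁻¹).PosSemidef := by
  -- Both conditions are Schur complements of the block matrix `[R, 1; 1, P⁻¹]`.
  have := hR.isUnit.invertible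
  have := hP.inv.isUnit.invertible
  have hR₁₁ := hR.fromBlocks₁₁ (1 : Matrix n n 𝕜) P⁻¹
  have hP₂₂ := PosDef.fromBlocks₂₂ R (1 : Matrix n n 𝕜) hP.inv
  simp only [conjTranspose_one, Matrix.one_mul, Matrix.mul_one] at hR₁₁ hP₂₂
  rw [nonsing_inv_nonsing_inv P ((isUnit_iff_isUnit_det P).mp hP.isUnit)] at hP₂₂
  exact hR₁₁.mp (hP₂₂.mpr hPR)

theorem posSemidef_conj_inv_sub_conj_inv_add [DecidableEq n] {E P R : Matrix n n ℝ}
    (hE : IsUnit E) (hP : P.PosDef) (hR : R.PosSemidef) :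
    (((Eᵀ)⁻¹ * P * E⁻¹)⁻¹ - E * (R + P)⁻¹ * Eᵀ).PosSemidef := by
  have hEdet := (isUnit_iff_isUnit_det E).mp hE
  have hinv : ((Eᵀ)⁻¹ * P * E⁻¹)⁻¹ = E * P⁻¹ * Eᵀ := by
    rw [Matrix.mul_inv_rev, Matrix.mul_inv_rev, nonsing_inv_nonsing_inv _ hEdet,
      nonsing_inv_nonsing_inv _ (by rwa [det_transpose]), Matrix.mul_assoc]
  have h := (hP.posSemidef_inv_sub_inv (PosDef.posSemidef_add hR hP)
    (by rwa [add_sub_cancel_right])).mul_mul_conjTranspose_same E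
  rw [hinv]
  rwa [conjTranspose_eq_transpose_of_trivial, Matrix.mul_sub, Matrix.sub_mul] at h

theorem posSemidef_intervalIntegral {f : ℝ → Matrix n n ℝ} (hf : Continuous f) {a b : ℝ}
    (hab : a ≤ b) (hpsd : ∀ s ∈ Icc a b, (f s).PosSemidef) :
    (∫ s in a..b, f s).PosSemidef := by
  have hint := hf.intervalIntegrable (μ := MeasureTheory.volume) a b
  refine posSemidef_iff_dotProduct_mulVec.mpr ⟨?_, fun x => ?_⟩
  · have hT := (LinearMap.toContinuousLinearMap
      (transposeLinearEquiv n n ℝ ℝ).toLinearMap).intervalIntegral_comp_comm hint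
    change _ᴴ = _
    rw [conjTranspose_eq_transpose_of_trivial]
    refine hT.symm.trans (intervalIntegral.integral_congr fun s hs => ?_)
    change (f s)ᵀ = f s
    simpa using (hpsd s (uIcc_of_le hab ▸ hs)).isHermitian.eq
  · let q : Matrix n n ℝ →ₗ[ℝ] ℝ :=
      { toFun := fun M => star x ⬝ᵥ M *ᵥ x
        map_add' := fun M N => by simp [add_mulVec, dotProduct_add]
        map_smul' := fun c M => by simp [smul_mulVec, dotProduct_smul] }
    exact (intervalIntegral.integral_nonneg hab fun s hs =>
      (hpsd s hs).dotProduct_mulVec_nonneg x).trans_eq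
        ((LinearMap.toContinuousLinearMap q).intervalIntegral_comp_comm hint)

end Matrix

section Riccati

variable {n : Type*} [Fintype n]

def riccatiField (A S P : Matrix n n ℝ) : Matrix n n ℝ := A * P + P * Aᵀ - P * S * P

theorem hasDerivAt_conj_inv_riccatiField [DecidableEq n] {A S E N : ℝ → Matrix n n ℝ} {u : ℝ}
    (hE : HasDerivAt E (A u * E u) u) (hN : HasDerivAt N ((E u)ᵀ * S u * E u) u)
    (hNu : IsUnit (N u)) :
    HasDerivAt (fun s => E s * (N s)⁻¹ * (E s)ᵀ)
      (riccatiField (A u) (S u) (E u * (N u)⁻¹ * (E u)ᵀ)) u := by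
  refine ((hE.matrix_mul (hN.matrix_inv hNu)).matrix_mul hE.matrix_transpose).congr_deriv ?_
  simp only [riccatiField, transpose_mul, Matrix.mul_assoc, Matrix.add_mul, Matrix.neg_mul,
    Matrix.mul_neg]
  abel

theorem eqOn_of_hasDerivAt_riccatiField {A S P₁ P₂ : ℝ → Matrix n n ℝ} {a b : ℝ}
    (hA : ContinuousOn A (Icc a b)) (hS : ContinuousOn S (Icc a b))
    (hP₁ : ∀ u ∈ Icc a b, HasDerivAt P₁ (riccatiField (A u) (S u) (P₁ u)) u)
    (hP₂ : ∀ u ∈ Icc a b, HasDerivAt P₂ (riccatiField (A u) (S u) (P₂ u)) u)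
    (ha : P₁ a = P₂ a) : EqOn P₁ P₂ (Icc a b) := by
  have hcont : ∀ {P : ℝ → Matrix n n ℝ} {F : ℝ → Matrix n n ℝ},
      (∀ u ∈ Icc a b, HasDerivAt P (F u) u) → ContinuousOn P (Icc a b) :=
    fun hP u hu => (hP u hu).continuousAt.continuousWithinAt
  -- The difference `D = P₁ - P₂` solves `D' = (A - P₂ S) D + D (Aᵀ - S P₁)`.
  have hD := eqOn_zero_of_hasDerivAt_mul_add_mul (D := P₁ - P₂)
    (B := fun u => A u - P₂ u * S u) (C := fun u => (A u)ᵀ - S u * P₁ u)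
    (hA.sub ((hcont hP₂).mul hS))
    ((continuous_id.matrix_transpose.comp_continuousOn hA).sub (hS.mul (hcont hP₁)))
    (fun u hu => ((hP₁ u hu).sub (hP₂ u hu)).congr_deriv (by
      simp only [riccatiField, Pi.sub_apply, Matrix.mul_sub, Matrix.sub_mul, Matrix.mul_assoc]
      abel))
    (sub_eq_zero.mpr ha)
  exact fun u hu => sub_eq_zero.mp (hD hu)

end Riccati

/-- Explicit solution of `∂_t P = A_t P + P A_tᵀ − P S_t P`, `P_0 = Q > 0`:
`φ^o_t(Q) = E_t(A)(Q⁻¹ + Ō_t)⁻¹ E_t(A)ᵀ`, with `Ō_t = ∫_0^t E_s(A)ᵀ S_s E_s(A) ds`;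
moreover if `Ō_t` is invertible then `φ^o_t(Q) ≤ O_t⁻¹` for the observability Gramian
`O_t = (E_t(A)ᵀ)⁻¹ Ō_t E_t(A)⁻¹`. -/
theorem observability_riccati_flow_formula (r : ℕ)
    (A S : ℝ → Matrix (Fin r) (Fin r) ℝ)
    (hAcont : Continuous A) (hScont : Continuous S)
    (hS : ∀ t : ℝ, (S t).PosSemidef)
    (Q : Matrix (Fin r) (Fin r) ℝ) (hQ : Q.PosDef)
    (E : ℝ → Matrix (Fin r) (Fin r) ℝ)
    (hE0 : E 0 = 1)
    (hE : ∀ t : ℝ, HasDerivAt E (A t * E t) t)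
    (φo : ℝ → Matrix (Fin r) (Fin r) ℝ)
    (hφo0 : φo 0 = Q)
    (hφo : ∀ t : ℝ, HasDerivAt φo
      (A t * φo t + φo t * (A t)ᵀ - φo t * S t * φo t) t) :
    ∀ t : ℝ, 0 ≤ t →
      φo t = E t * (Q⁻¹ + ∫ s in (0:ℝ)..t, (E s)ᵀ * S s * E s)⁻¹ * (E t)ᵀ ∧
      (IsUnit (∫ s in (0:ℝ)..t, (E s)ᵀ * S s * E s) →
        ((((E t)ᵀ)⁻¹ * (∫ s in (0:ℝ)..t, (E s)ᵀ * S s * E s) * (E t)⁻¹)⁻¹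
          - φo t).PosSemidef) := by
  intro t ht
  have hEcont : Continuous E := continuous_iff_continuousAt.mpr fun s => (hE s).continuousAt
  have hf : Continuous fun s => (E s)ᵀ * S s * E s :=
    (hEcont.matrix_transpose.matrix_mul hScont).matrix_mul hEcont
  have hŌ : ∀ u, 0 ≤ u → (∫ s in (0:ℝ)..u, (E s)ᵀ * S s * E s).PosSemidef := fun u hu =>
    posSemidef_intervalIntegral hf hu fun s _ => by
      simpa using (hS s).mul_mul_conjTranspose_same (E s)ᵀ
  have hG := fun u (hu : u ∈ Icc 0 t) => hasDerivAt_conj_inv_riccatiField (hE u)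
    ((hf.integral_hasStrictDerivAt 0 u).hasDerivAt.const_add Q⁻¹)
    (hQ.inv.add_posSemidef (hŌ u hu.1)).isUnit
  have hQ' : Q⁻¹⁻¹ = Q := nonsing_inv_nonsing_inv Q ((isUnit_iff_isUnit_det Q).mp hQ.isUnit)
  have hφ := eqOn_of_hasDerivAt_riccatiField hAcont.continuousOn hScont.continuousOn
    (fun u _ => hφo u) hG (by simp [hφo0, hE0, hQ']) ⟨ht, le_rfl⟩
  refine ⟨hφ, fun hŌt => ?_⟩
  rw [hφ]
  exact posSemidef_conj_inv_sub_conj_inv_add (isUnit_of_hasDerivAt_mul_self hAcont hE0 hE ht)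
    ((hŌ t ht).posDef_iff_isUnit.mpr hŌt) hQ.inv.posSemidef
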